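/- Let ℛ be a self-adjoint linear endomorphism of ℝ³×ℝ³ (with the standard inner product) and let t₂ > 0. Then the following are equivalent: (i) for all unit vectors a, b ∈ ℝ³, every w ∈ ℝ³ with w·b = 0, and all X, Z ∈ ℝ⁴, one has t₂⟨ℛ(0,w), ω(X,Z) − ω(PX,PZ)⟩ = ⟨K⁻(w)X, Z⟩, where P := K⁺(a)K⁻(b); (ii) ℛ(0,w) = (0, t₂⁻¹ w) for every w ∈ ℝ³. -/

import Mathlib

open Matrix

/-- The matrix of `K_{s₁⁺}`: e₁↦e₂, e₂↦−e₁, e₃↦e₄, e₄↦−e₃. -/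
def J1p : Matrix (Fin 4) (Fin 4) ℝ := !![0,-1,0,0; 1,0,0,0; 0,0,0,-1; 0,0,1,0]
/-- The matrix of `K_{s₂⁺}`: e₁↦e₃, e₃↦−e₁, e₄↦e₂, e₂↦−e₄. -/
def J2p : Matrix (Fin 4) (Fin 4) ℝ := !![0,0,-1,0; 0,0,0,1; 1,0,0,0; 0,-1,0,0]
/-- The matrix of `K_{s₃⁺}`: e₁↦e₄, e₄↦−e₁, e₂↦e₃, e₃↦−e₂. -/
def J3p : Matrix (Fin 4) (Fin 4) ℝ := !![0,0,0,-1; 0,0,-1,0; 0,1,0,0; 1,0,0,0]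
/-- The matrix of `K_{s₁⁻}`: e₁↦e₂, e₂↦−e₁, e₃↦−e₄, e₄↦e₃. -/
def J1m : Matrix (Fin 4) (Fin 4) ℝ := !![0,-1,0,0; 1,0,0,0; 0,0,0,1; 0,0,-1,0]
/-- The matrix of `K_{s₂⁻}`: e₁↦e₃, e₃↦−e₁, e₄↦−e₂, e₂↦e₄. -/
def J2m : Matrix (Fin 4) (Fin 4) ℝ := !![0,0,-1,0; 0,0,0,-1; 1,0,0,0; 0,1,0,0]
/-- The matrix of `K_{s₃⁻}`: e₁↦e₄, e₄↦−e₁, e₂↦−e₃, e₃↦e₂. -/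
def J3m : Matrix (Fin 4) (Fin 4) ℝ := !![0,0,0,-1; 0,0,1,0; 0,-1,0,0; 1,0,0,0]

/-- `K⁺(a) = a₁J₁⁺ + a₂J₂⁺ + a₃J₃⁺`. -/
def Kp (a : Fin 3 → ℝ) : Matrix (Fin 4) (Fin 4) ℝ := a 0 • J1p + a 1 • J2p + a 2 • J3p
/-- `K⁻(a) = a₁J₁⁻ + a₂J₂⁻ + a₃J₃⁻`. -/
def Km (a : Fin 3 → ℝ) : Matrix (Fin 4) (Fin 4) ℝ := a 0 • J1m + a 1 • J2m + a 2 • J3m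

/-- The coordinate vector of the 2-vector X∧Y in the basis (s₁⁺,s₂⁺,s₃⁺,s₁⁻,s₂⁻,s₃⁻):
ω(X,Y) = ((½⟨JᵢX,Y⟩)ᵢ for the self-dual part, (½⟨JᵢX,Y⟩)ᵢ for the anti-self-dual part). -/
noncomputable def omega (X Y : Fin 4 → ℝ) : (Fin 3 → ℝ) × (Fin 3 → ℝ) :=
  (![(1/2) * ((J1p *ᵥ X) ⬝ᵥ Y), (1/2) * ((J2p *ᵥ X) ⬝ᵥ Y), (1/2) * ((J3p *ᵥ X) ⬝ᵥ Y)],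
   ![(1/2) * ((J1m *ᵥ X) ⬝ᵥ Y), (1/2) * ((J2m *ᵥ X) ⬝ᵥ Y), (1/2) * ((J3m *ᵥ X) ⬝ᵥ Y)])

/-- The standard inner product on ℝ³ × ℝ³. -/
def ip (x y : (Fin 3 → ℝ) × (Fin 3 → ℝ)) : ℝ := x.1 ⬝ᵥ y.1 + x.2 ⬝ᵥ y.2

/-!
`K⁺` and `K⁻` are commuting quaternionic structures: `K(a)K(a) = -|a|²`, and
`K(a)K(v)K(a) = |a|²K(v) - 2(a·v)K(a)`. Hence conjugation by `P = K⁺(a)K⁻(b)` acts on `Λ²₊` as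
the half-turn about `a` and on `Λ²₋` as the half-turn about `b`, so for unit `a`, `b`
`ω(X,Z) - ω(PX,PZ) = 2(π_a ω⁺, π_b ω⁻)`, with `π_a` the orthogonal projection onto `a^⊥`.
Since `⟨K⁻(w)X, Z⟩ = 2 w·ω⁻(X,Z)` and the `ω(X,Z)` span `ℝ³ × ℝ³`, condition (i) for fixed
`a`, `b`, `w` says exactly `t₂ (π_a u, π_b v) = (0, w)`, where `(u, v) = ℛ(0,w)`.
This holds when `(u, v) = (0, w/t₂)` and `w ⊥ b`. Conversely, taking `a = b = e_j` for the two
`j ≠ i` determines `ℛ(0, c eᵢ)`, and linearity gives `ℛ(0,w)` for all `w`.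
-/

theorem Kp_transpose (a : Fin 3 → ℝ) : (Kp a)ᵀ = -Kp a := by
  ext i j
  fin_cases i <;> fin_cases j <;> simp [Kp, J1p, J2p, J3p]

theorem Km_transpose (a : Fin 3 → ℝ) : (Km a)ᵀ = -Km a := by
  ext i j
  fin_cases i <;> fin_cases j <;> simp [Km, J1m, J2m, J3m]

theorem Km_mul_Km_self (a : Fin 3 → ℝ) : Km a * Km a = -(a ⬝ᵥ a) • 1 := by
  ext i j
  fin_cases i <;> fin_cases j <;>
    simp [Km, J1m, J2m, J3m, Matrix.mul_apply, Fin.sum_univ_four, dotProduct, Fin.sum_univ_three] <;>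
    ring

theorem Kp_mul_Kp_self (a : Fin 3 → ℝ) : Kp a * Kp a = -(a ⬝ᵥ a) • 1 := by
  ext i j
  fin_cases i <;> fin_cases j <;>
    simp [Kp, J1p, J2p, J3p, Matrix.mul_apply, Fin.sum_univ_four, dotProduct, Fin.sum_univ_three] <;>
    ring

theorem Kp_commute_Km (a b : Fin 3 → ℝ) : Commute (Kp a) (Km b) := by
  ext i j
  fin_cases i <;> fin_cases j <;>
    simp [Kp, Km, J1p, J2p, J3p, J1m, J2m, J3m, Matrix.mul_apply, Fin.sum_univ_four] <;>
    ring

theorem Kp_mul_Kp_mul_Kp (a v : Fin 3 → ℝ) :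
    Kp a * Kp v * Kp a = (a ⬝ᵥ a) • Kp v - (2 * (a ⬝ᵥ v)) • Kp a := by
  ext i j
  fin_cases i <;> fin_cases j <;>
    simp [Kp, J1p, J2p, J3p, Matrix.mul_apply, Fin.sum_univ_four, dotProduct, Fin.sum_univ_three] <;>
    ring

theorem Km_mul_Km_mul_Km (a v : Fin 3 → ℝ) :
    Km a * Km v * Km a = (a ⬝ᵥ a) • Km v - (2 * (a ⬝ᵥ v)) • Km a := by
  ext i j
  fin_cases i <;> fin_cases j <;>
    simp [Km, J1m, J2m, J3m, Matrix.mul_apply, Fin.sum_univ_four, dotProduct, Fin.sum_univ_three] <;>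
    ring

theorem transpose_mul_Kp_mul (a b v : Fin 3 → ℝ) :
    (Kp a * Km b)ᵀ * Kp v * (Kp a * Km b) = -(b ⬝ᵥ b) • (Kp a * Kp v * Kp a) := by
  have hb : Commute (Kp a * Kp v * Kp a) (Km b) :=
    ((Kp_commute_Km a b).mul_left (Kp_commute_Km v b)).mul_left (Kp_commute_Km a b)
  rw [transpose_mul, Kp_transpose, Km_transpose, neg_mul_neg]
  calc Km b * Kp a * Kp v * (Kp a * Km b) = Km b * (Kp a * Kp v * Kp a) * Km b := by
        simp only [mul_assoc]
    _ = Kp a * Kp v * Kp a * (Km b * Km b) := by rw [← hb.eq, mul_assoc]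
    _ = -(b ⬝ᵥ b) • (Kp a * Kp v * Kp a) := by rw [Km_mul_Km_self, mul_smul_comm, mul_one]

theorem transpose_mul_Km_mul (a b v : Fin 3 → ℝ) :
    (Kp a * Km b)ᵀ * Km v * (Kp a * Km b) = -(a ⬝ᵥ a) • (Km b * Km v * Km b) := by
  have ha : Commute (Kp a) (Km b * Km v * Km b) :=
    ((Kp_commute_Km a b).mul_right (Kp_commute_Km a v)).mul_right (Kp_commute_Km a b)
  rw [(Kp_commute_Km a b).eq, transpose_mul, Kp_transpose, Km_transpose, neg_mul_neg]
  calc Kp a * Km b * Km v * (Km b * Kp a) = Kp a * (Km b * Km v * Km b) * Kp a := by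
        simp only [mul_assoc]
    _ = Km b * Km v * Km b * (Kp a * Kp a) := by rw [ha.eq, mul_assoc]
    _ = -(a ⬝ᵥ a) • (Km b * Km v * Km b) := by rw [Kp_mul_Kp_self, mul_smul_comm, mul_one]

theorem Kp_mulVec_dotProduct (v : Fin 3 → ℝ) (X Z : Fin 4 → ℝ) :
    (Kp v *ᵥ X) ⬝ᵥ Z = 2 * (v ⬝ᵥ (omega X Z).1) := by
  conv_rhs => rw [dotProduct, Fin.sum_univ_three]
  simp only [omega, Kp, add_mulVec, smul_mulVec, add_dotProduct, smul_dotProduct,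
    cons_val_zero, cons_val_one, cons_val_two, tail_cons, head_cons, smul_eq_mul]
  ring

theorem Km_mulVec_dotProduct (v : Fin 3 → ℝ) (X Z : Fin 4 → ℝ) :
    (Km v *ᵥ X) ⬝ᵥ Z = 2 * (v ⬝ᵥ (omega X Z).2) := by
  conv_rhs => rw [dotProduct, Fin.sum_univ_three]
  simp only [omega, Km, add_mulVec, smul_mulVec, add_dotProduct, smul_dotProduct,
    cons_val_zero, cons_val_one, cons_val_two, tail_cons, head_cons, smul_eq_mul]
  ring

theorem mulVec_mulVec_dotProduct_mulVec {n α : Type*} [Fintype n] [CommSemiring α]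
    (M P : Matrix n n α) (X Z : n → α) :
    (M *ᵥ (P *ᵥ X)) ⬝ᵥ (P *ᵥ Z) = ((Pᵀ * M * P) *ᵥ X) ⬝ᵥ Z := by
  rw [dotProduct_mulVec, ← mulVec_transpose, mulVec_mulVec, mulVec_mulVec, Matrix.mul_assoc]

theorem dotProduct_omega_fst_mulVec (a b v : Fin 3 → ℝ) (X Z : Fin 4 → ℝ) :
    v ⬝ᵥ (omega ((Kp a * Km b) *ᵥ X) ((Kp a * Km b) *ᵥ Z)).1 =
      (b ⬝ᵥ b) * (2 * (a ⬝ᵥ v) * (a ⬝ᵥ (omega X Z).1) - (a ⬝ᵥ a) * (v ⬝ᵥ (omega X Z).1)) := by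
  have h := Kp_mulVec_dotProduct v ((Kp a * Km b) *ᵥ X) ((Kp a * Km b) *ᵥ Z)
  rw [mulVec_mulVec_dotProduct_mulVec, transpose_mul_Kp_mul, Kp_mul_Kp_mul_Kp, smul_mulVec,
    sub_mulVec, smul_mulVec, smul_mulVec, smul_dotProduct, sub_dotProduct, smul_dotProduct,
    smul_dotProduct, Kp_mulVec_dotProduct, Kp_mulVec_dotProduct] at h
  simp only [smul_eq_mul] at h
  linarith

theorem dotProduct_omega_snd_mulVec (a b v : Fin 3 → ℝ) (X Z : Fin 4 → ℝ) :
    v ⬝ᵥ (omega ((Kp a * Km b) *ᵥ X) ((Kp a * Km b) *ᵥ Z)).2 =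
      (a ⬝ᵥ a) * (2 * (b ⬝ᵥ v) * (b ⬝ᵥ (omega X Z).2) - (b ⬝ᵥ b) * (v ⬝ᵥ (omega X Z).2)) := by
  have h := Km_mulVec_dotProduct v ((Kp a * Km b) *ᵥ X) ((Kp a * Km b) *ᵥ Z)
  rw [mulVec_mulVec_dotProduct_mulVec, transpose_mul_Km_mul, Km_mul_Km_mul_Km, smul_mulVec,
    sub_mulVec, smul_mulVec, smul_mulVec, smul_dotProduct, sub_dotProduct, smul_dotProduct,
    smul_dotProduct, Km_mulVec_dotProduct, Km_mulVec_dotProduct] at h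
  simp only [smul_eq_mul] at h
  linarith

def projPerp {n : Type*} [Fintype n] (a x : n → ℝ) : n → ℝ := x - (a ⬝ᵥ x) • a

theorem dotProduct_omega_sub_omega_fst {a b : Fin 3 → ℝ} (ha : a ⬝ᵥ a = 1) (hb : b ⬝ᵥ b = 1)
    (v : Fin 3 → ℝ) (X Z : Fin 4 → ℝ) :
    v ⬝ᵥ (omega X Z - omega ((Kp a * Km b) *ᵥ X) ((Kp a * Km b) *ᵥ Z)).1 =
      2 * (projPerp a v ⬝ᵥ (omega X Z).1) := by
  rw [Prod.fst_sub, dotProduct_sub, dotProduct_omega_fst_mulVec, ha, hb]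
  simp only [projPerp, sub_dotProduct, smul_dotProduct, smul_eq_mul]
  ring

theorem dotProduct_omega_sub_omega_snd {a b : Fin 3 → ℝ} (ha : a ⬝ᵥ a = 1) (hb : b ⬝ᵥ b = 1)
    (v : Fin 3 → ℝ) (X Z : Fin 4 → ℝ) :
    v ⬝ᵥ (omega X Z - omega ((Kp a * Km b) *ᵥ X) ((Kp a * Km b) *ᵥ Z)).2 =
      2 * (projPerp b v ⬝ᵥ (omega X Z).2) := by
  rw [Prod.snd_sub, dotProduct_sub, dotProduct_omega_snd_mulVec, ha, hb]
  simp only [projPerp, sub_dotProduct, smul_dotProduct, smul_eq_mul]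
  ring

theorem eq_zero_of_forall_ip_omega_eq_zero {y : (Fin 3 → ℝ) × (Fin 3 → ℝ)}
    (h : ∀ X Z, ip y (omega X Z) = 0) : y = 0 := by
  -- `ω(e₁,e₂) ± ω(e₃,e₄)`, `ω(e₁,e₃) ± ω(e₄,e₂)`, `ω(e₁,e₄) ± ω(e₂,e₃)` are the standard basis.
  have h12 := h ![1,0,0,0] ![0,1,0,0]
  have h34 := h ![0,0,1,0] ![0,0,0,1]
  have h13 := h ![1,0,0,0] ![0,0,1,0]
  have h42 := h ![0,0,0,1] ![0,1,0,0]
  have h14 := h ![1,0,0,0] ![0,0,0,1]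
  have h23 := h ![0,1,0,0] ![0,0,1,0]
  simp [ip, omega, J1p, J2p, J3p, J1m, J2m, J3m, mulVec, dotProduct, Fin.sum_univ_four,
    Fin.sum_univ_three] at h12 h34 h13 h42 h14 h23
  ext i <;> fin_cases i <;> simp <;> linarith

theorem forall_omega_condition_iff {a b : Fin 3 → ℝ} (ha : a ⬝ᵥ a = 1) (hb : b ⬝ᵥ b = 1)
    (t : ℝ) (σ : (Fin 3 → ℝ) × (Fin 3 → ℝ)) (w : Fin 3 → ℝ) :
    (∀ X Z : Fin 4 → ℝ,
        t * ip σ (omega X Z - omega ((Kp a * Km b) *ᵥ X) ((Kp a * Km b) *ᵥ Z)) =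
          (Km w *ᵥ X) ⬝ᵥ Z) ↔
      t • (projPerp a σ.1, projPerp b σ.2) = (0, w) := by
  have key : ∀ X Z : Fin 4 → ℝ,
      t * ip σ (omega X Z - omega ((Kp a * Km b) *ᵥ X) ((Kp a * Km b) *ᵥ Z)) -
          (Km w *ᵥ X) ⬝ᵥ Z =
        2 * ip (t • (projPerp a σ.1, projPerp b σ.2) - (0, w)) (omega X Z) := by
    intro X Z
    unfold ip
    rw [dotProduct_omega_sub_omega_fst ha hb, dotProduct_omega_sub_omega_snd ha hb,
      Km_mulVec_dotProduct]
    simp only [Prod.fst_sub, Prod.snd_sub, Prod.smul_fst, Prod.smul_snd,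
      sub_dotProduct, smul_dotProduct, zero_dotProduct, smul_eq_mul]
    ring
  constructor
  · intro h
    rw [← sub_eq_zero]
    refine eq_zero_of_forall_ip_omega_eq_zero fun X Z => ?_
    linarith [key X Z, h X Z]
  · intro h X Z
    have := key X Z
    rw [h, sub_self] at this
    simpa [ip, sub_eq_zero] using this

theorem smul_eq_of_forall_smul_projPerp_single (i : Fin 3) {t : ℝ} {x y : Fin 3 → ℝ}
    (h : ∀ j ≠ i, t • projPerp (Pi.single j 1) x = y) : t • x = y := by
  ext m
  obtain ⟨j, hji, hjm⟩ : ∃ j, j ≠ i ∧ j ≠ m := by clear h; revert i m; decide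
  simpa [projPerp, hjm.symm] using congrFun (h j hji) m

theorem eq_of_forall_smul_projPerp_single {t : ℝ} (ht : t ≠ 0) (i : Fin 3)
    {σ : (Fin 3 → ℝ) × (Fin 3 → ℝ)} {w : Fin 3 → ℝ}
    (h : ∀ j ≠ i, t • (projPerp (Pi.single j 1) σ.1, projPerp (Pi.single j 1) σ.2) = (0, w)) :
    σ = (0, t⁻¹ • w) := by
  have h₁ : t • σ.1 = 0 :=
    smul_eq_of_forall_smul_projPerp_single i fun j hj => congrArg Prod.fst (h j hj)
  have h₂ : t • σ.2 = w :=
    smul_eq_of_forall_smul_projPerp_single i fun j hj => congrArg Prod.snd (h j hj)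
  ext1
  · exact (smul_eq_zero.1 h₁).resolve_left ht
  · exact (eq_inv_smul_iff₀ ht).2 h₂

theorem stmt11 (R : ((Fin 3 → ℝ) × (Fin 3 → ℝ)) →ₗ[ℝ] ((Fin 3 → ℝ) × (Fin 3 → ℝ)))
    (t₂ : ℝ) (ht₂ : 0 < t₂) :
    (∀ a b : Fin 3 → ℝ, a ⬝ᵥ a = 1 → b ⬝ᵥ b = 1 →
      ∀ w : Fin 3 → ℝ, w ⬝ᵥ b = 0 → ∀ X Z : Fin 4 → ℝ,
        t₂ * ip (R (0, w))
            (omega X Z - omega ((Kp a * Km b) *ᵥ X) ((Kp a * Km b) *ᵥ Z)) =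
          (Km w *ᵥ X) ⬝ᵥ Z) ↔
    (∀ w : Fin 3 → ℝ, R (0, w) = (0, t₂⁻¹ • w)) := by
  constructor
  · intro H
    have hsingle : ∀ i (c : ℝ), R (0, Pi.single i c) = (0, t₂⁻¹ • Pi.single i c) := fun i c =>
      eq_of_forall_smul_projPerp_single ht₂.ne' i fun j hji =>
        (forall_omega_condition_iff (by simp) (by simp) _ _ _).1
          (H _ _ (by simp) (by simp) _ (by simp [hji]))
    have hlin : R ∘ₗ LinearMap.inr ℝ _ _ = LinearMap.inr ℝ _ _ ∘ₗ (t₂⁻¹ • LinearMap.id) :=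
      LinearMap.pi_ext fun i c => by simpa using hsingle i c
    exact fun w => by simpa using LinearMap.congr_fun hlin w
  · intro h a b ha hb w hw X Z
    have hbw : b ⬝ᵥ w = 0 := by rwa [dotProduct_comm]
    refine (forall_omega_condition_iff ha hb t₂ _ w).2 ?_ X Z
    simp [h w, projPerp, hbw, smul_smul, ht₂.ne']
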